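/- Let G = (V, E) be a graph with a linear order < on E. If F = (V, A_f^1) and F' = (V, A_f^2) are distinct spanning forests of G, A_i^1 ⊆ E_i(F), A_e^1 ⊆ E_e(F), A_i^2 ⊆ E_i(F'), A_e^2 ⊆ E_e(F'), then (A_f^1 \ A_i^1) ∪ A_e^1 ≠ (A_f^2 \ A_i^2) ∪ A_e^2. -/

import Mathlib

/-! If the two images agree, let `a` be the largest edge of `A₁ ∆ A₂`, say `a ∈ A₁`. Symmetric
exchange for spanning forests gives `b ∈ A₂ \ A₁` such that both `A₁ - a + b` and `A₂ - b + a` are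
spanning forests, and `b < a` by maximality. If `b` lies in the common image, it lies in `Ae₁`,
yet `A₁ - a + b` shows that it is not externally active for `A₁`; otherwise it lies in `Ai₂`,
yet `A₂ - b + a` shows that it is not internally active for `A₂`. -/

open Finset

attribute [local instance] Classical.propDecidable

/-- A multigraph on vertex type `V` with edge index type `E` is given by a map
`ends : E → Sym2 V` (loops and parallel edges are allowed).  For an edge subset
`A ⊆ E`, `edgeGraph ends A` is the simple graph on `V` whose adjacency is
witnessed by some edge of `A`; it determines the connected components of the
spanning subgraph `(V, A)`. -/
def edgeGraph {V E : Type} (ends : E → Sym2 V) (A : Finset E) : SimpleGraph V where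
  Adj a b := a ≠ b ∧ ∃ e ∈ A, ends e = s(a, b)
  symm := ⟨by
    rintro a b ⟨hab, e, he, hs⟩
    exact ⟨Ne.symm hab, e, he, by rw [hs, Sym2.eq_swap]⟩⟩
  loopless := ⟨by rintro a ⟨h, -⟩; exact h rfl⟩

/-- `kc ends A` is the number of connected components of the spanning subgraph `(V, A)`. -/
noncomputable def kc {V E : Type} (ends : E → Sym2 V) (A : Finset E) : ℕ :=
  Nat.card (edgeGraph ends A).ConnectedComponent

/-- `(V, A)` is a spanning forest of `(V, E)`: it is a forest
(`|A| + k((V,A)) = |V|`, which rules out loops, parallel edges and cycles)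
with as many connected components as the whole graph. -/
def IsSpanningForest {V E : Type} [Fintype V] [Fintype E] (ends : E → Sym2 V)
    (A : Finset E) : Prop :=
  A.card + kc ends A = Fintype.card V ∧ kc ends A = kc ends Finset.univ

/-- `F - e + f`. -/
def swapEdge {E : Type} [DecidableEq E] (A : Finset E) (e f : E) : Finset E :=
  insert f (A.erase e)

/-- `e` is internally active in the spanning forest `(V, A)`. -/
def InternallyActive {V E : Type} [Fintype V] [Fintype E] [DecidableEq E] [LinearOrder E]
    (ends : E → Sym2 V) (A : Finset E) (e : E) : Prop :=
  e ∈ A ∧ ¬ ∃ f, f ∉ A ∧ e < f ∧ IsSpanningForest ends (swapEdge A e f)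

/-- `f` is externally active in the spanning forest `(V, A)`. -/
def ExternallyActive {V E : Type} [Fintype V] [Fintype E] [DecidableEq E] [LinearOrder E]
    (ends : E → Sym2 V) (A : Finset E) (f : E) : Prop :=
  f ∉ A ∧ ¬ ∃ e, e ∈ A ∧ f < e ∧ IsSpanningForest ends (swapEdge A e f)

/-- The set `E_i(F)` of internally active edges of the spanning forest `F = (V, A)`. -/
noncomputable def intAct {V E : Type} [Fintype V] [Fintype E] [DecidableEq E] [LinearOrder E]
    (ends : E → Sym2 V) (A : Finset E) : Finset E :=
  Finset.univ.filter (InternallyActive ends A)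

/-- The set `E_e(F)` of externally active edges of the spanning forest `F = (V, A)`. -/
noncomputable def extAct {V E : Type} [Fintype V] [Fintype E] [DecidableEq E] [LinearOrder E]
    (ends : E → Sym2 V) (A : Finset E) : Finset E :=
  Finset.univ.filter (ExternallyActive ends A)

namespace SimpleGraph

variable {V : Type*} {G G' : SimpleGraph V} {x y p q : V}

theorem reachable_sup_edge_iff :
    (G ⊔ edge x y).Reachable p q ↔ G.Reachable p q ∨
      G.Reachable p x ∧ G.Reachable y q ∨ G.Reachable p y ∧ G.Reachable x q := by
  constructor
  · rintro ⟨w⟩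
    induction w with
    | nil => exact .inl .rfl
    | cons h _ ih =>
      rw [sup_adj, edge_adj] at h
      rcases h with h | ⟨⟨rfl, rfl⟩ | ⟨rfl, rfl⟩, -⟩
      · have := h.reachable
        grind [Reachable.trans]
      · grind [Reachable.rfl]
      · grind [Reachable.rfl]
  · have hxy : (G ⊔ edge x y).Reachable x y := by
      by_cases h : x = y
      · exact h ▸ .rfl
      · exact Adj.reachable (by simp [edge_adj, h])
    rintro (h | ⟨h₁, h₂⟩ | ⟨h₁, h₂⟩)
    · exact h.mono le_sup_left
    · exact ((h₁.mono le_sup_left).trans hxy).trans (h₂.mono le_sup_left)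
    · exact ((h₁.mono le_sup_left).trans hxy.symm).trans (h₂.mono le_sup_left)

theorem reachable_sup_edge_of_reachable (hxy : G.Reachable x y) :
    (G ⊔ edge x y).Reachable = G.Reachable := by
  ext p q
  rw [reachable_sup_edge_iff]
  grind [Reachable.trans, Reachable.symm]

theorem card_connectedComponent_sup_edge_of_reachable (hxy : G.Reachable x y) :
    Nat.card (G ⊔ edge x y).ConnectedComponent = Nat.card G.ConnectedComponent := by
  unfold ConnectedComponent
  rw [reachable_sup_edge_of_reachable hxy]

theorem card_connectedComponent_sup_edge_add_one [Finite V] (hxy : ¬G.Reachable x y) :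
    Nat.card (G ⊔ edge x y).ConnectedComponent + 1 = Nat.card G.ConnectedComponent := by
  let φ := ConnectedComponent.map (Hom.ofLE (le_sup_left : G ≤ G ⊔ edge x y))
  have hφ : ∀ p q, φ (G.connectedComponentMk p) = φ (G.connectedComponentMk q) ↔
      G.Reachable p q ∨ G.Reachable p x ∧ G.Reachable y q ∨ G.Reachable p y ∧ G.Reachable x q :=
    fun p q ↦ ConnectedComponent.eq.trans reachable_sup_edge_iff
  have hbij : Function.Bijective
      (fun c : ({G.connectedComponentMk y}ᶜ : Set G.ConnectedComponent) ↦ φ c) := by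
    refine ⟨fun ⟨c, hc⟩ ⟨d, hd⟩ h ↦ ?_, fun c' ↦ ?_⟩
    · induction c using ConnectedComponent.ind
      induction d using ConnectedComponent.ind
      simp only [Set.mem_compl_singleton_iff, ne_eq, ConnectedComponent.eq] at hc hd
      grind [ConnectedComponent.sound, Reachable.symm]
    · obtain ⟨c, rfl⟩ := ConnectedComponent.surjective_map_ofLE le_sup_left c'
      by_cases hc : c = G.connectedComponentMk y
      · refine ⟨⟨G.connectedComponentMk x, by simpa [ConnectedComponent.eq] using hxy⟩, ?_⟩
        rw [hc]
        exact (hφ x y).2 (.inr (.inl ⟨.rfl, .rfl⟩))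
      · exact ⟨⟨c, hc⟩, rfl⟩
  rw [← Nat.card_congr (Equiv.ofBijective _ hbij), Nat.card_coe_set_eq,
    ← Set.ncard_compl_add_ncard, Set.ncard_singleton]

theorem Reachable.of_le_of_card_connectedComponent_eq [Finite V] (hle : G ≤ G')
    (hcard : Nat.card G.ConnectedComponent = Nat.card G'.ConnectedComponent)
    (h : G'.Reachable p q) : G.Reachable p q := by
  have hinj := ((ConnectedComponent.surjective_map_ofLE hle).bijective_of_nat_card_le hcard.le).1
  exact ConnectedComponent.exact (hinj (ConnectedComponent.sound h))

end SimpleGraph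

open SimpleGraph

section EdgeGraph

variable {V E : Type} {ends : E → Sym2 V}

theorem edgeGraph_mono {A B : Finset E} (h : A ⊆ B) : edgeGraph ends A ≤ edgeGraph ends B :=
  fun _ _ ⟨hne, e, he, hends⟩ ↦ ⟨hne, e, h he, hends⟩

theorem edgeGraph_insert [DecidableEq E] {A : Finset E} {e : E} {x y : V}
    (he : ends e = s(x, y)) : edgeGraph ends (insert e A) = edgeGraph ends A ⊔ edge x y := by
  ext p q
  simp only [edgeGraph, sup_adj, edge_adj, Finset.exists_mem_insert, he, Sym2.eq_iff]
  grind

theorem reachable_of_mem {A : Finset E} {b : E} (hb : b ∈ A) {x y : V} (he : ends b = s(x, y)) :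
    (edgeGraph ends A).Reachable x y := by
  by_cases h : x = y
  · exact h ▸ .rfl
  · exact Adj.reachable ⟨h, b, hb, he⟩

theorem kc_insert_of_reachable [DecidableEq E] {A : Finset E} {e : E} {x y : V}
    (he : ends e = s(x, y)) (hxy : (edgeGraph ends A).Reachable x y) :
    kc ends (insert e A) = kc ends A := by
  rw [kc, kc, edgeGraph_insert he, card_connectedComponent_sup_edge_of_reachable hxy]

theorem kc_insert_add_one_of_not_reachable [Finite V] [DecidableEq E] {A : Finset E} {e : E}
    {x y : V} (he : ends e = s(x, y)) (hxy : ¬(edgeGraph ends A).Reachable x y) :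
    kc ends (insert e A) + 1 = kc ends A := by
  rw [kc, kc, edgeGraph_insert he, card_connectedComponent_sup_edge_add_one hxy]

theorem card_le_card_add_kc [Fintype V] [DecidableEq E] (A : Finset E) :
    Fintype.card V ≤ A.card + kc ends A := by
  induction A using Finset.induction_on with
  | empty =>
    have hbot : edgeGraph ends (∅ : Finset E) = ⊥ := by ext; simp [edgeGraph]
    rw [Finset.card_empty, zero_add, ← Nat.card_eq_fintype_card, kc, hbot]
    refine Nat.card_le_card_of_injective (⊥ : SimpleGraph V).connectedComponentMk fun u v h ↦ ?_
    exact reachable_bot.1 (ConnectedComponent.exact h)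
  | @insert e A he ih =>
    obtain ⟨x, y, hxy⟩ : ∃ x y, ends e = s(x, y) := Sym2.exists.mp ⟨_, rfl⟩
    rw [Finset.card_insert_of_notMem he]
    by_cases hr : (edgeGraph ends A).Reachable x y
    · have := kc_insert_of_reachable hxy hr
      omega
    · have := kc_insert_add_one_of_not_reachable hxy hr
      omega

theorem not_reachable_erase_of_forest [Fintype V] [DecidableEq E] {A : Finset E}
    (hA : A.card + kc ends A = Fintype.card V) {b : E} (hb : b ∈ A) {x y : V}
    (he : ends b = s(x, y)) : ¬(edgeGraph ends (A.erase b)).Reachable x y := by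
  intro hxy
  have hkc := kc_insert_of_reachable he hxy
  rw [Finset.insert_erase hb] at hkc
  have := card_le_card_add_kc (ends := ends) (A.erase b)
  have := Finset.card_erase_add_one hb
  omega

theorem IsSpanningForest.reachable [Fintype V] [Fintype E] {A : Finset E}
    (hA : IsSpanningForest ends A) {u v : V} (huv : (edgeGraph ends univ).Reachable u v) :
    (edgeGraph ends A).Reachable u v :=
  huv.of_le_of_card_connectedComponent_eq (edgeGraph_mono (subset_univ A)) hA.2

theorem IsSpanningForest.isSpanningForest_swapEdge [Fintype V] [Fintype E] [DecidableEq E]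
    {A : Finset E} (hA : IsSpanningForest ends A) {a b : E} (ha : a ∈ A) {x y : V}
    (hb : ends b = s(x, y)) (hxy : ¬(edgeGraph ends (A.erase a)).Reachable x y) :
    IsSpanningForest ends (swapEdge A a b) := by
  obtain ⟨u, v, huv⟩ : ∃ u v, ends a = s(u, v) := Sym2.exists.mp ⟨_, rfl⟩
  have hkc_erase :=
    kc_insert_add_one_of_not_reachable huv (not_reachable_erase_of_forest hA.1 ha huv)
  rw [Finset.insert_erase ha] at hkc_erase
  have hkc_swap := kc_insert_add_one_of_not_reachable hb hxy
  have hbA : b ∉ A.erase a := fun hbA ↦ hxy (reachable_of_mem hbA hb)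
  have hcard := Finset.card_erase_add_one ha
  have hcard_swap := Finset.card_insert_of_notMem hbA
  unfold IsSpanningForest at hA ⊢
  rw [swapEdge]
  omega

theorem reachable_erase_of_walk [DecidableEq E] {A : Finset E} {b : E} {p q : V}
    (w : (edgeGraph ends A).Walk p q) (hw : ends b ∉ w.edges) :
    (edgeGraph ends (A.erase b)).Reachable p q := by
  refine ⟨w.transfer _ fun z hz ↦ ?_⟩
  induction z using Sym2.ind with | _ r s =>
  obtain ⟨hne, f, hf, hfz⟩ := w.edges_subset_edgeSet hz
  exact ⟨hne, f, mem_erase.2 ⟨by rintro rfl; exact hw (hfz ▸ hz), hf⟩, hfz⟩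

/-- The first edge of the path whose ends are not `H`-reachable works: it is a bridge of the
forest `B`, and the rest of the path avoids it. -/
theorem exists_crossing_edge_of_isPath [Fintype V] [DecidableEq E] {B : Finset E}
    (hB : B.card + kc ends B = Fintype.card V) {H : SimpleGraph V} {u v : V}
    {w : (edgeGraph ends B).Walk u v} (hw : w.IsPath) (huv : ¬H.Reachable u v) :
    ∃ b ∈ B, ∃ x y, ends b = s(x, y) ∧ ¬H.Reachable x y ∧
      ¬(edgeGraph ends (B.erase b)).Reachable u v := by
  induction w with
  | nil => exact absurd .rfl huv
  | @cons u m v h w ih =>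
    rw [Walk.cons_isPath_iff] at hw
    obtain ⟨hum, e, he, hends⟩ := h
    by_cases hHum : H.Reachable u m
    · obtain ⟨b, hb, x, y, hbxy, hHxy, hbmv⟩ := ih hw.1 fun hmv ↦ huv (hHum.trans hmv)
      have heb : e ≠ b := by
        rintro rfl
        rw [hends, Sym2.eq_iff] at hbxy
        rcases hbxy with ⟨rfl, rfl⟩ | ⟨rfl, rfl⟩
        exacts [hHxy hHum, hHxy hHum.symm]
      refine ⟨b, hb, x, y, hbxy, hHxy, fun hbuv ↦ hbmv ?_⟩
      exact (reachable_of_mem (mem_erase.2 ⟨heb, he⟩) hends).symm.trans hbuv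
    · refine ⟨e, he, u, m, hends, hHum, fun heuv ↦ ?_⟩
      have hmv := reachable_erase_of_walk w
        (hends ▸ fun h ↦ hw.2 (w.fst_mem_support_of_mem_edges h))
      exact not_reachable_erase_of_forest hB he hends (heuv.trans hmv.symm)

theorem IsSpanningForest.exists_exchange [Fintype V] [Fintype E] [DecidableEq E]
    {A₁ A₂ : Finset E} (hF₁ : IsSpanningForest ends A₁) (hF₂ : IsSpanningForest ends A₂)
    {a : E} (ha₁ : a ∈ A₁) (ha₂ : a ∉ A₂) :
    ∃ b ∈ A₂, b ∉ A₁ ∧ IsSpanningForest ends (swapEdge A₁ a b) ∧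
      IsSpanningForest ends (swapEdge A₂ b a) := by
  obtain ⟨u, v, huv⟩ : ∃ u v, ends a = s(u, v) := Sym2.exists.mp ⟨_, rfl⟩
  have hsep := not_reachable_erase_of_forest hF₁.1 ha₁ huv
  obtain ⟨w⟩ := hF₂.reachable (reachable_of_mem (mem_univ a) huv)
  obtain ⟨b, hb₂, x, y, hbxy, hxy, hbuv⟩ :=
    exists_crossing_edge_of_isPath hF₂.1 w.bypass_isPath hsep
  have hb₁ : b ∉ A₁ := fun hb₁ ↦
    hxy (reachable_of_mem (mem_erase.2 ⟨by rintro rfl; exact ha₂ hb₂, hb₁⟩) hbxy)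
  exact ⟨b, hb₂, hb₁, hF₁.isSpanningForest_swapEdge ha₁ hbxy hxy,
    hF₂.isSpanningForest_swapEdge hb₂ huv hbuv⟩

theorem exists_gt_of_activity_image_eq [Fintype V] [Fintype E] [DecidableEq E]
    [LinearOrder E] {A₁ A₂ Ai₁ Ae₁ Ai₂ Ae₂ : Finset E} (hF₁ : IsSpanningForest ends A₁)
    (hF₂ : IsSpanningForest ends A₂) (he₁ : Ae₁ ⊆ extAct ends A₁) (hi₂ : Ai₂ ⊆ intAct ends A₂)
    (heq : (A₁ \ Ai₁) ∪ Ae₁ = (A₂ \ Ai₂) ∪ Ae₂) {a : E} (ha₁ : a ∈ A₁) (ha₂ : a ∉ A₂) :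
    ∃ b ∈ A₂, b ∉ A₁ ∧ a < b := by
  obtain ⟨b, hb₂, hb₁, hswap₁, hswap₂⟩ := hF₁.exists_exchange hF₂ ha₁ ha₂
  refine ⟨b, hb₂, hb₁, lt_of_not_ge fun hba ↦ ?_⟩
  have hba : b < a := hba.lt_of_ne (by rintro rfl; exact hb₁ ha₁)
  by_cases hbe : b ∈ Ae₁
  · exact (mem_filter.1 (he₁ hbe)).2.2 ⟨a, ha₁, hba, hswap₁⟩
  · have hbi : b ∈ Ai₂ := by
      by_contra hbi
      have hb : b ∈ (A₂ \ Ai₂) ∪ Ae₂ := mem_union_left _ (mem_sdiff.2 ⟨hb₂, hbi⟩)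
      rw [← heq] at hb
      simp [hb₁, hbe] at hb
    exact (mem_filter.1 (hi₂ hbi)).2.2 ⟨a, ha₂, hba, hswap₂⟩

end EdgeGraph

/-- Injectivity: distinct spanning forests yield distinct edge sets
`(A_f \ A_i) ∪ A_e`, for any choices of active subsets. -/
theorem activity_map_injective {V E : Type} [Fintype V] [Fintype E] [DecidableEq E]
    [LinearOrder E] (ends : E → Sym2 V)
    (A₁ A₂ Ai₁ Ae₁ Ai₂ Ae₂ : Finset E)
    (hF₁ : IsSpanningForest ends A₁) (hF₂ : IsSpanningForest ends A₂)
    (hne : A₁ ≠ A₂)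
    (hi₁ : Ai₁ ⊆ intAct ends A₁) (he₁ : Ae₁ ⊆ extAct ends A₁)
    (hi₂ : Ai₂ ⊆ intAct ends A₂) (he₂ : Ae₂ ⊆ extAct ends A₂) :
    (A₁ \ Ai₁) ∪ Ae₁ ≠ (A₂ \ Ai₂) ∪ Ae₂ := by
  intro heq
  have hD : (symmDiff A₁ A₂).Nonempty := by
    rwa [nonempty_iff_ne_empty, Ne, ← bot_eq_empty, symmDiff_eq_bot]
  have hmax : ∀ b ∈ symmDiff A₁ A₂, ¬(symmDiff A₁ A₂).max' hD < b :=
    fun b hb ↦ not_lt.2 (le_max' _ b hb)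
  rcases mem_symmDiff.1 (max'_mem _ hD) with ⟨ha₁, ha₂⟩ | ⟨ha₂, ha₁⟩
  · obtain ⟨b, hb₂, hb₁, hab⟩ :=
      exists_gt_of_activity_image_eq hF₁ hF₂ he₁ hi₂ heq ha₁ ha₂
    exact hmax b (mem_symmDiff.2 (.inr ⟨hb₂, hb₁⟩)) hab
  · obtain ⟨b, hb₁, hb₂, hab⟩ :=
      exists_gt_of_activity_image_eq hF₂ hF₁ he₂ hi₁ heq.symm ha₂ ha₁
    exact hmax b (mem_symmDiff.2 (.inl ⟨hb₁, hb₂⟩)) hab
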